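/- arXiv:1807.07156 — 3 statements merged into one kernel-verified Lean document; each statement's English description precedes it below -/
import Mathlib

section
/- Let J = (X, k, R) be an instance of Binary Constrained Clustering, let 0 < ε ≤ 4 and 0 < α ≤ ε/(8k), and define k̂ to be the largest index i ∈ {2,…,k} such that J is (i,α)-irreducible, or k̂ = 1 if no such index exists. Then OPT_{k̂}(J) ≤ (1 + ε/4)·OPT(J). -/
/-!
Past `k̂` no level is irreducible, so each step `OPT_{i-1} ≤ (1+α)·OPT_i` for `k̂ < i ≤ k`
chains to `OPT_{k̂} ≤ (1+α)^(k-k̂)·OPT_k = (1+α)^(k-k̂)·OPT`, and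
`(1+α)^k ≤ 1 + 2kα ≤ 1 + ε/4` because `kα ≤ ε/8 ≤ 1/2`.
-/

/-- The cost of clustering the vectors of `X` with the set of centers `S`. -/
noncomputable def bccCost (m : ℕ) (X : Finset (Fin m → Bool)) (S : Set (Fin m → Bool)) : ℕ :=
  ∑ x ∈ X, sInf ((fun c => hammingDist x c) '' S)

/-- `OPT(J)` for an instance `J = (X, k, R)` of Binary Constrained Clustering. -/
noncomputable def bccOPT (m k : ℕ) (X : Finset (Fin m → Bool))
    (R : Fin m → Set (Fin k → Bool)) : ℕ :=
  sInf { c | ∃ C : Fin k → (Fin m → Bool),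
    (∀ i, (fun j => C j i) ∈ R i) ∧ c = bccCost m X (Set.range C) }

/-- `OPT_j(J)`: the best cost over all index sets `I` of size `j` and all `j`-tuples of
centers satisfying the projection of `R` onto `I`. -/
noncomputable def bccOPTj (m k : ℕ) (X : Finset (Fin m → Bool))
    (R : Fin m → Set (Fin k → Bool)) (j : ℕ) : ℕ :=
  sInf { c | ∃ I : Finset (Fin k), I.card = j ∧ ∃ C : Fin k → (Fin m → Bool),
    (∀ i, ∃ t ∈ R i, ∀ a ∈ I, C a i = t a) ∧ c = bccCost m X ((fun a => C a) '' ↑I) }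

/-- `J` is `(j, α)`-irreducible if `OPT_{j-1}(J) ≥ (1+α)·OPT_j(J)`. -/
noncomputable def bccIrreducible (m k : ℕ) (X : Finset (Fin m → Bool))
    (R : Fin m → Set (Fin k → Bool)) (j : ℕ) (α : ℝ) : Prop :=
  (1 + α) * (bccOPTj m k X R j : ℝ) ≤ (bccOPTj m k X R (j - 1) : ℝ)

lemma bccOPTj_self (m k : ℕ) (X : Finset (Fin m → Bool)) (R : Fin m → Set (Fin k → Bool)) :
    bccOPTj m k X R k = bccOPT m k X R := by
  unfold bccOPTj bccOPT
  congr 1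
  ext c
  constructor
  · rintro ⟨I, hI, C, hC, rfl⟩
    obtain rfl : I = Finset.univ := Finset.eq_univ_of_card I (by simpa using hI)
    refine ⟨C, fun i => ?_, by simp⟩
    obtain ⟨t, ht, hCt⟩ := hC i
    rwa [show (fun j => C j i) = t from funext fun a => hCt a (Finset.mem_univ a)]
  · rintro ⟨C, hC, rfl⟩
    exact ⟨Finset.univ, by simp, C, fun i => ⟨fun j => C j i, hC i, fun _ _ => rfl⟩, by simp⟩

lemma one_add_pow_le_one_add_two_mul {R : Type*} [Field R] [LinearOrder R]
    [IsStrictOrderedRing R] {α : R} (hα : 0 ≤ α) :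
    ∀ n : ℕ, 2 * n * α ≤ 1 → (1 + α) ^ n ≤ 1 + 2 * n * α
  | 0, _ => by simp
  | n + 1, h => by
    push_cast at h ⊢
    have ih := one_add_pow_le_one_add_two_mul hα n (by linarith)
    calc (1 + α) ^ (n + 1) = (1 + α) ^ n * (1 + α) := pow_succ _ _
      _ ≤ (1 + 2 * n * α) * (1 + α) := by gcongr
      _ ≤ 1 + 2 * (n + 1) * α := by nlinarith

lemma le_pow_mul_of_le_mul_succ {R : Type*} [Semiring R] [PartialOrder R] [IsOrderedRing R]
    {f : ℕ → R} {c : R} (hc : 0 ≤ c) {a b : ℕ} (hab : a ≤ b)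
    (hf : ∀ i, a ≤ i → i < b → f i ≤ c * f (i + 1)) : f a ≤ c ^ (b - a) * f b := by
  obtain ⟨d, rfl⟩ := Nat.exists_eq_add_of_le hab
  induction d with
  | zero => simp
  | succ d ih =>
    calc f a ≤ c ^ d * f (a + d) := by
          simpa using ih (by omega) fun i hi hid => hf i hi (by omega)
      _ ≤ c ^ d * (c * f (a + d + 1)) := by gcongr; exact hf _ (by omega) (by omega)
      _ = c ^ (a + (d + 1) - a) * f (a + (d + 1)) := by
          rw [Nat.add_sub_cancel_left, pow_succ, mul_assoc, Nat.add_assoc]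

theorem opt_khat_le_general (m k : ℕ) (X : Finset (Fin m → Bool))
    (R : Fin m → Set (Fin k → Bool)) (ε α : ℝ) (hε4 : ε ≤ 4)
    (hα0 : 0 < α) (hα : α ≤ ε / (8 * k)) (khat : ℕ)
    (hkhat : khat = sSup ({1} ∪ {i | 2 ≤ i ∧ i ≤ k ∧ bccIrreducible m k X R i α})) :
    (bccOPTj m k X R khat : ℝ) ≤ (1 + ε / 4) * (bccOPT m k X R : ℝ) := by
  -- `ε / (8 * 0) = 0`, so `k = 0` would force `α ≤ 0`.
  have hk : 0 < k := Nat.pos_of_ne_zero fun h => by simp [h] at hα; linarith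
  have hkα : (k : ℝ) * α ≤ ε / 8 := by rw [le_div_iff₀ (by positivity)] at hα; linarith
  set S : Set ℕ := {1} ∪ {i | 2 ≤ i ∧ i ≤ k ∧ bccIrreducible m k X R i α}
  have hSk : k ∈ upperBounds S := by rintro i (rfl | hi); exacts [hk, hi.2.1]
  have hkhat_pos : 1 ≤ khat := hkhat ▸ le_csSup ⟨k, hSk⟩ (Or.inl rfl)
  have hkhat_le : khat ≤ k := hkhat ▸ csSup_le ⟨1, Or.inl rfl⟩ hSk
  have hstep : ∀ i, khat ≤ i → i < k →
      (bccOPTj m k X R i : ℝ) ≤ (1 + α) * bccOPTj m k X R (i + 1) := fun i hi hik => by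
    by_contra h
    exact notMem_of_csSup_lt (hkhat ▸ Nat.lt_succ_of_le hi) ⟨k, hSk⟩
      (Or.inr ⟨by omega, hik, (not_le.1 h).le⟩)
  calc (bccOPTj m k X R khat : ℝ)
      ≤ (1 + α) ^ (k - khat) * bccOPTj m k X R k :=
        le_pow_mul_of_le_mul_succ (f := fun j => (bccOPTj m k X R j : ℝ)) (by linarith)
          hkhat_le hstep
    _ ≤ (1 + α) ^ k * bccOPT m k X R := by
        rw [bccOPTj_self]; gcongr
        · linarith
        · omega
    _ ≤ (1 + 2 * k * α) * bccOPT m k X R := by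
        gcongr; exact one_add_pow_le_one_add_two_mul hα0.le k (by linarith)
    _ ≤ (1 + ε / 4) * bccOPT m k X R := by gcongr; linarith

/-- With `k̂` the largest `i ∈ {2,…,k}` such that `J` is `(i,α)`-irreducible (or `1` if
none exists), `OPT_{k̂}(J) ≤ (1 + ε/4)·OPT(J)` whenever `0 < ε ≤ 4` and
`0 < α ≤ ε/(8k)`. -/
theorem opt_khat_le (m k : ℕ) (hk : 1 ≤ k) (X : Finset (Fin m → Bool))
    (R : Fin m → Set (Fin k → Bool)) (ε α : ℝ) (hε0 : 0 < ε) (hε4 : ε ≤ 4)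
    (hα0 : 0 < α) (hα : α ≤ ε / (8 * k)) (khat : ℕ)
    (hkhat : khat = sSup ({1} ∪ {i | 2 ≤ i ∧ i ≤ k ∧ bccIrreducible m k X R i α})) :
    (bccOPTj m k X R khat : ℝ) ≤ (1 + ε / 4) * (bccOPT m k X R : ℝ) :=
  opt_khat_le_general m k X R ε α hε4 hα0 hα khat hkhat
end

section
/- Let T : ℕ × ℕ → ℝ satisfy T(k′, n′) ≤ c for k′ = 0 or n′ = 0, and T(k′, n′) ≤ T(k′, ⌈n′/2⌉ ) + L·T(k′−1, n′) + c·L·M·n′ for k′, n′ ≥ 1 (where ⌈n′/2⌉ ≤ n′/2 + 1/2, interpreted so halving strictly decreases n′ for n′ ≥ 1), with constants c ≥ 1, L ≥ 1, M ≥ 1. Then T(k′, n′) ≤ c·L^{k′}·2^{3k′²}·M·n′ for all k′ ≥ 1, n′ ≥ 1. -/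
/-!
Induct on `k'`, proving `T(k', n') ≤ s(k')·n'` with `s(k') = c·L^{k'}·2^{3k'²}·M` (for `k' = 0` this
is just the base case). By the induction hypothesis the terms `L·T(k', n') + c·L·M·n'` are at most
`c·L^{k'+1}·(2^{3k'²} + 1)·M·n'`, which is at most `s(k'+1)/2 · n'` because
`2·(2^{3k'²} + 1) ≤ 2^{3(k'+1)²}`. A recurrence `S(n) ≤ S(⌊n/2⌋) + (B/2)·n` with `S(0) ≤ B/2`
solves to `S(n) ≤ B·n`, the halving contributing a geometric series of ratio `1/2`.
-/

theorem two_mul_two_pow_add_one_le (k : ℕ) : 2 * (2 ^ (3 * k ^ 2) + 1) ≤ 2 ^ (3 * (k + 1) ^ 2) :=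
  calc 2 * (2 ^ (3 * k ^ 2) + 1) ≤ 2 ^ (3 * k ^ 2 + 2) := by
        have := Nat.one_le_two_pow (n := 3 * k ^ 2)
        rw [pow_add]; omega
    _ ≤ 2 ^ (3 * (k + 1) ^ 2) := Nat.pow_le_pow_right two_pos (by ring_nf; omega)

theorem le_mul_of_halving_recurrence {S : ℕ → ℝ} {B : ℝ} (hB : 0 ≤ B) (h0 : S 0 ≤ B / 2)
    (hS : ∀ n, 1 ≤ n → S n ≤ S (n / 2) + B / 2 * n) : ∀ n, 1 ≤ n → S n ≤ B * n := by
  intro n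
  induction n using Nat.strong_induction_on with
  | _ n ih =>
    intro hn
    obtain rfl | hn2 := eq_or_lt_of_le hn
    · have := hS 1 le_rfl
      norm_num at this ⊢
      linarith
    · have hhalf : S (n / 2) ≤ B * (n / 2 : ℕ) := ih _ (by omega) (by omega)
      have hcast : ((n / 2 : ℕ) : ℝ) ≤ n / 2 := Nat.cast_div_le
      have := hS n hn
      linarith [mul_le_mul_of_nonneg_left hcast hB]

def recurrenceSlope (c L M : ℝ) (k : ℕ) : ℝ := c * L ^ k * 2 ^ (3 * k ^ 2) * M

section
variable {c L M : ℝ}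

theorem recurrenceSlope_nonneg (hc : 0 ≤ c) (hL : 0 ≤ L) (hM : 0 ≤ M) (k : ℕ) :
    0 ≤ recurrenceSlope c L M k := by
  unfold recurrenceSlope; positivity

theorem mul_recurrenceSlope_add_le (hc : 0 ≤ c) (hL : 1 ≤ L) (hM : 0 ≤ M) (k : ℕ) :
    L * recurrenceSlope c L M k + c * L * M ≤ recurrenceSlope c L M (k + 1) / 2 := by
  have hC : 0 ≤ c * L ^ (k + 1) * M := by
    have : 0 ≤ L := by linarith
    positivity
  have hexp : (2 : ℝ) * (2 ^ (3 * k ^ 2) + 1) ≤ 2 ^ (3 * (k + 1) ^ 2) := by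
    exact_mod_cast two_mul_two_pow_add_one_le k
  have hL1 : L ≤ L ^ (k + 1) := by simpa using pow_le_pow_right₀ hL (Nat.succ_pos k)
  calc L * recurrenceSlope c L M k + c * L * M
      ≤ c * L ^ (k + 1) * M * (2 ^ (3 * k ^ 2) + 1) := by
        have : c * L * M ≤ c * L ^ (k + 1) * M := by gcongr
        unfold recurrenceSlope
        rw [pow_succ L k] at this ⊢
        linarith
    _ ≤ recurrenceSlope c L M (k + 1) / 2 := by
        unfold recurrenceSlope
        linarith [mul_le_mul_of_nonneg_left hexp hC]

theorem le_recurrenceSlope_succ_div_two (hc : 0 ≤ c) (hL : 1 ≤ L) (hM : 1 ≤ M) (k : ℕ) :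
    c ≤ recurrenceSlope c L M (k + 1) / 2 :=
  calc c ≤ c * (L * M) := le_mul_of_one_le_right hc (one_le_mul_of_one_le_of_one_le hL hM)
    _ ≤ L * recurrenceSlope c L M k + c * L * M := by
        rw [← mul_assoc]
        exact le_add_of_nonneg_left <| mul_nonneg (by linarith) <|
          recurrenceSlope_nonneg hc (by linarith) (by linarith) k
    _ ≤ recurrenceSlope c L M (k + 1) / 2 := mul_recurrenceSlope_add_le hc hL (by linarith) k

end

/-- The running-time recurrence `T(k',n') ≤ T(k', ⌊n'/2⌋) + L·T(k'-1, n') + c·L·M·n'`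
with base cases `T(0,·), T(·,0) ≤ c` solves to `T(k',n') ≤ c·L^{k'}·2^{3k'²}·M·n'`. -/
theorem recurrence_solution (c L M : ℝ) (hc : 1 ≤ c) (hL : 1 ≤ L) (hM : 1 ≤ M)
    (T : ℕ → ℕ → ℝ)
    (hbase1 : ∀ n', T 0 n' ≤ c) (hbase2 : ∀ k', T k' 0 ≤ c)
    (hrec : ∀ k' n', 1 ≤ k' → 1 ≤ n' →
      T k' n' ≤ T k' (n' / 2) + L * T (k' - 1) n' + c * L * M * n') :
    ∀ k' n', 1 ≤ k' → 1 ≤ n' →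
      T k' n' ≤ c * L ^ k' * 2 ^ (3 * k' ^ 2) * M * n' := by
  have hc0 : 0 ≤ c := by linarith
  have hL0 : 0 ≤ L := by linarith
  have hM0 : 0 ≤ M := by linarith
  suffices h : ∀ k n, 1 ≤ n → T k n ≤ recurrenceSlope c L M k * n from fun k n _ ↦ h k n
  intro k
  induction k with
  | zero =>
    intro n hn
    calc T 0 n ≤ c := hbase1 n
      _ ≤ c * (M * n) :=
          le_mul_of_one_le_right hc0 (one_le_mul_of_one_le_of_one_le hM (by exact_mod_cast hn))
      _ = recurrenceSlope c L M 0 * n := by unfold recurrenceSlope; ring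
  | succ k ih =>
    refine le_mul_of_halving_recurrence (recurrenceSlope_nonneg hc0 hL0 hM0 _)
      ((hbase2 _).trans (le_recurrenceSlope_succ_div_two hc0 hL hM k)) fun n hn ↦ ?_
    calc T (k + 1) n ≤ T (k + 1) (n / 2) + L * T k n + c * L * M * n := by
          simpa using hrec (k + 1) n (by omega) hn
      _ ≤ T (k + 1) (n / 2) + L * (recurrenceSlope c L M k * n) + c * L * M * n := by
          gcongr; exact ih n hn
      _ = T (k + 1) (n / 2) + (L * recurrenceSlope c L M k + c * L * M) * n := by ring
      _ ≤ T (k + 1) (n / 2) + recurrenceSlope c L M (k + 1) / 2 * n := by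
          gcongr; exact mul_recurrenceSlope_add_le hc0 hL hM0 k
end

section
/- In the setting of the Sampling Lemma with u = argmin_{x∈R} d^w(x,p), for every v ∈ R with d^w(v,p) > (1+ε/2)·d^w(u,p) it holds that Pr(d^w(v, Q) ≤ d^w(u, Q)) ≤ (d^w(u,p)/d^w(v,p)) · ε/2^{k+1}, provided r ≥ c·(k/ε²)·log(1/ε) for a sufficiently large universal constant c and 0 < ε ≤ 1/10. -/
open MeasureTheory

/-- The distance from `u` to `v` weighted by `w`. -/
noncomputable def wDist {k : ℕ} (w u v : Fin k → ℝ) : ℝ := ∑ i, w i * |u i - v i|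

/-- Interpret a Boolean tuple as a real tuple. -/
def bTuple {k : ℕ} (x : Fin k → Bool) : Fin k → ℝ := fun i => if x i then 1 else 0

/-- The empirical frequency vector of `r` samples per coordinate. -/
noncomputable def empFreq {k : ℕ} (r : ℕ) (ω : Fin k → Fin r → Bool) : Fin k → ℝ :=
  fun i => (1 / (r : ℝ)) * ∑ j, (if ω i j then (1 : ℝ) else 0)

/-- The product Bernoulli measure on `k × r` coin flips. -/
noncomputable def bernoulliSamples {k : ℕ} (r : ℕ) (p : Fin k → ℝ)
    (hple : ∀ i, ENNReal.ofReal (p i) ≤ 1) :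
    Measure (Fin k → Fin r → Bool) :=
  Measure.pi (fun i : Fin k =>
    Measure.pi (fun _ : Fin r => (PMF.bernoulli (ENNReal.ofReal (p i)).toNNReal
      (by simpa using ENNReal.toNNReal_mono ENNReal.one_ne_top (hple i))).toMeasure))

/-!
Only the coordinates on which `u` and `v` disagree matter: with `c` the weights `w` restricted
to them, `W = ∑ c` and `m = d^c(u, p)`, one has `d^w(v, x) - d^w(u, x) = W - 2 d^c(u, x)` for
every `x ∈ [0,1]^k`. So the bad event forces the weighted mismatch count `r d^c(u, Q)`, whose
mean is `r m`, above `r W / 2`, and the gap hypothesis gives `2m/W < 1 - ε/5`. The Chernoff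
bound, with the moment generating function controlled by the convexity of `exp` and the tilt
`exp (tW) = 1/τ`, bounds the probability by `exp (r/2 (1 - τ + log τ))` for every
`τ ∈ (0, 1]` with `τ ≥ 2m/W`; for the given `r` this is at most `(τ/2) ε / 2^(k+1)` once
`τ ≤ 1 - ε/5`. Letting `τ ↓ 2m/W` and using `m/W ≤ d^w(u,p)/d^w(v,p)` concludes.
-/

open Finset Real ProbabilityTheory Filter Topology

section Coordinates

variable {k : ℕ}

lemma abs_bTuple_sub (u : Fin k → Bool) (i : Fin k) {x : ℝ} (hx₀ : 0 ≤ x) (hx₁ : x ≤ 1) :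
    |bTuple u i - x| = if u i then 1 - x else x := by
  cases h : u i <;> simp [bTuple, h, abs_of_nonneg, hx₀, hx₁]

lemma wDist_nonneg {w : Fin k → ℝ} (hw : ∀ i, 0 ≤ w i) (x y : Fin k → ℝ) : 0 ≤ wDist w x y :=
  sum_nonneg fun i _ => mul_nonneg (hw i) (abs_nonneg _)

lemma wDist_mono_weight {c w : Fin k → ℝ} (hcw : ∀ i, c i ≤ w i) (x y : Fin k → ℝ) :
    wDist c x y ≤ wDist w x y :=
  sum_le_sum fun i _ => mul_le_mul_of_nonneg_right (hcw i) (abs_nonneg _)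

lemma empFreq_mem_Icc (r : ℕ) (ω : Fin k → Fin r → Bool) (i : Fin k) :
    0 ≤ empFreq r ω i ∧ empFreq r ω i ≤ 1 := by
  have hcount : ∑ j, (if ω i j then (1 : ℝ) else 0) ≤ r :=
    (sum_le_sum fun j _ => show (if ω i j then (1 : ℝ) else 0) ≤ 1 by split <;> norm_num).trans_eq
      (by simp)
  simp only [empFreq, one_div_mul_eq_div]
  exact ⟨by positivity, div_le_one_of_le₀ hcount r.cast_nonneg⟩

def disagreeWeight (w : Fin k → ℝ) (u v : Fin k → Bool) : Fin k → ℝ :=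
  fun i => if u i = v i then 0 else w i

lemma disagreeWeight_nonneg {w : Fin k → ℝ} (hw : ∀ i, 0 ≤ w i) (u v : Fin k → Bool) (i : Fin k) :
    0 ≤ disagreeWeight w u v i := by
  unfold disagreeWeight; split <;> simp [hw i]

lemma disagreeWeight_le {w : Fin k → ℝ} (hw : ∀ i, 0 ≤ w i) (u v : Fin k → Bool) (i : Fin k) :
    disagreeWeight w u v i ≤ w i := by
  unfold disagreeWeight; split <;> simp [hw i]

lemma wDist_sub_wDist_eq (w : Fin k → ℝ) (u v : Fin k → Bool) {x : Fin k → ℝ}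
    (hx : ∀ i, 0 ≤ x i ∧ x i ≤ 1) :
    wDist w (bTuple v) x - wDist w (bTuple u) x =
      ∑ i, disagreeWeight w u v i - 2 * wDist (disagreeWeight w u v) (bTuple u) x := by
  simp only [wDist, mul_sum, ← sum_sub_distrib]
  refine sum_congr rfl fun i _ => ?_
  rw [abs_bTuple_sub u i (hx i).1 (hx i).2, abs_bTuple_sub v i (hx i).1 (hx i).2]
  cases hu : u i <;> cases hv : v i <;> simp [disagreeWeight, hu, hv] <;> ring

lemma setOf_wDist_le_wDist_empFreq_subset (w : Fin k → ℝ) (u v : Fin k → Bool) (r : ℕ) :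
    {ω | wDist w (bTuple v) (empFreq r ω) ≤ wDist w (bTuple u) (empFreq r ω)} ⊆
      {ω | (∑ i, disagreeWeight w u v i) / 2 ≤
        wDist (disagreeWeight w u v) (bTuple u) (empFreq r ω)} := fun ω hω => by
  have := wDist_sub_wDist_eq w u v (empFreq_mem_Icc r ω)
  simp only [Set.mem_ofPred_eq] at hω ⊢
  linarith

def weightedMismatches {r : ℕ} (c : Fin k → ℝ) (u : Fin k → Bool) (ω : Fin k → Fin r → Bool) :
    ℝ :=
  ∑ i, ∑ j, if ω i j = u i then 0 else c i

lemma natCast_mul_wDist_empFreq {r : ℕ} (hr : 0 < r) (c : Fin k → ℝ) (u : Fin k → Bool)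
    (ω : Fin k → Fin r → Bool) :
    (r : ℝ) * wDist c (bTuple u) (empFreq r ω) = weightedMismatches c u ω := by
  simp only [wDist, weightedMismatches, mul_sum]
  refine sum_congr rfl fun i _ => ?_
  set N₁ := ∑ j, if ω i j then (1 : ℝ) else 0
  set N₀ := ∑ j, if ω i j then (0 : ℝ) else 1
  have hN : N₁ + N₀ = r := by
    have h : ∀ j, (if ω i j then (1 : ℝ) else 0) + (if ω i j then 0 else 1) = 1 := fun j => by
      cases ω i j <;> norm_num
    rw [← sum_add_distrib, sum_congr rfl fun j _ => h j]
    simp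
  have hmismatch : (∑ j, if ω i j = u i then 0 else c i) = c i * if u i then N₀ else N₁ := by
    rw [mul_ite, mul_sum, mul_sum]
    cases u i <;> refine sum_congr rfl fun j _ => ?_ <;> cases ω i j <;> simp
  have hQ : empFreq r ω i = N₁ / r := by simp [empFreq, N₁, div_eq_inv_mul]
  obtain ⟨hQ₀, hQ₁⟩ := empFreq_mem_Icc r ω i
  rw [hmismatch, abs_bTuple_sub u i hQ₀ hQ₁, hQ]
  have hr' : (r : ℝ) ≠ 0 := by positivity
  cases u i
  · simp only [Bool.false_eq_true, if_false]
    field_simp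
  · simp only [if_true]
    field_simp
    rw [← hN]
    ring

end Coordinates

lemma one_add_mul_exp_sub_one_le {q c W t : ℝ} (hq : 0 ≤ q) (hc : 0 ≤ c) (hcW : c ≤ W)
    (hW : 0 < W) :
    1 + q * (exp (t * c) - 1) ≤ exp (q * c / W * (exp (t * W) - 1)) := by
  have hchord : exp (t * c) - 1 ≤ c / W * (exp (t * W) - 1) := by
    have h := convexOn_exp.2 (Set.mem_univ 0) (Set.mem_univ (t * W))
      (sub_nonneg.2 ((div_le_one hW).2 hcW)) (div_nonneg hc hW.le) (sub_add_cancel 1 (c / W))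
    simp only [smul_eq_mul, mul_zero, exp_zero, mul_one] at h
    rw [show c / W * (t * W) = t * c by field_simp, zero_add] at h
    linarith
  calc 1 + q * (exp (t * c) - 1) ≤ 1 + q * c / W * (exp (t * W) - 1) := by
        rw [mul_div_assoc, mul_assoc]; gcongr
    _ ≤ _ := by linarith [add_one_le_exp (q * c / W * (exp (t * W) - 1))]

section Sampling

variable {k r : ℕ} {p : Fin k → ℝ} {hple : ∀ i, ENNReal.ofReal (p i) ≤ 1}

instance : IsProbabilityMeasure (bernoulliSamples r p hple) := by
  unfold bernoulliSamples; infer_instance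

lemma integral_prod_prod_bernoulliSamples (hp : ∀ i, 0 ≤ p i) (g : Fin k → Bool → ℝ) :
    ∫ ω, ∏ i, ∏ j, g i (ω i j) ∂bernoulliSamples r p hple =
      ∏ i, (p i * g i true + (1 - p i) * g i false) ^ r := by
  unfold bernoulliSamples
  rw [integral_fintype_prod_eq_prod (fun i (x : Fin r → Bool) => ∏ j, g i (x j))]
  refine prod_congr rfl fun i _ => ?_
  rw [integral_fintype_prod_eq_prod (fun _ b => g i b), prod_const, card_univ, Fintype.card_fin,
    PMF.integral_eq_sum, Fintype.sum_bool]
  have hp1 : p i ≤ 1 := ENNReal.ofReal_le_one.mp (hple i)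
  simp [PMF.bernoulli, hp i, hp1]

lemma mgf_weightedMismatches_le (hp : ∀ i, 0 ≤ p i) {c : Fin k → ℝ} (hc : ∀ i, 0 ≤ c i)
    (u : Fin k → Bool) {W : ℝ} (hW : 0 < W) (hcW : ∀ i, c i ≤ W) (t : ℝ) :
    mgf (weightedMismatches c u) (bernoulliSamples r p hple) t ≤
      exp (r * (wDist c (bTuple u) p / W * (exp (t * W) - 1))) := by
  have hp1 : ∀ i, p i ≤ 1 := fun i => ENNReal.ofReal_le_one.mp (hple i)
  set q := fun i => |bTuple u i - p i|
  have hfactor : ∀ i, p i * exp (t * if true = u i then 0 else c i) +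
      (1 - p i) * exp (t * if false = u i then 0 else c i) = 1 + q i * (exp (t * c i) - 1) := by
    intro i
    simp only [q, abs_bTuple_sub u i (hp i) (hp1 i)]
    cases u i <;> simp <;> ring
  calc mgf _ (bernoulliSamples r p hple) t
      = ∏ i, (1 + q i * (exp (t * c i) - 1)) ^ r := by
        simp only [mgf, weightedMismatches, mul_sum, exp_sum, ← hfactor]
        exact integral_prod_prod_bernoulliSamples
          (g := fun i b => exp (t * if b = u i then 0 else c i)) hp
    _ ≤ ∏ i, exp (q i * c i / W * (exp (t * W) - 1)) ^ r := by
        have hnonneg : ∀ i, 0 ≤ 1 + q i * (exp (t * c i) - 1) := fun i => by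
          rw [← hfactor]
          exact add_nonneg (mul_nonneg (hp i) (exp_pos _).le)
            (mul_nonneg (sub_nonneg.2 (hp1 i)) (exp_pos _).le)
        refine prod_le_prod (fun i _ => pow_nonneg (hnonneg i) r) fun i _ => ?_
        exact pow_le_pow_left₀ (hnonneg i)
          (one_add_mul_exp_sub_one_le (abs_nonneg _) (hc i) (hcW i) hW) r
    _ = exp (r * (wDist c (bTuple u) p / W * (exp (t * W) - 1))) := by
        rw [prod_pow, ← exp_sum, ← exp_nat_mul]
        congr 2
        simp only [wDist, q, sum_div, sum_mul]
        exact sum_congr rfl fun i _ => by ring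

lemma measureReal_le_wDist_empFreq_le (hr : 0 < r) (hp : ∀ i, 0 ≤ p i) {c : Fin k → ℝ}
    (hc : ∀ i, 0 ≤ c i) (u : Fin k → Bool) {W : ℝ} (hW : 0 < W) (hcW : ∀ i, c i ≤ W) {t : ℝ}
    (ht : 0 ≤ t) (s : ℝ) :
    (bernoulliSamples r p hple).real {ω | s ≤ wDist c (bTuple u) (empFreq r ω)} ≤
      exp (r * (wDist c (bTuple u) p / W * (exp (t * W) - 1) - t * s)) := by
  have hevent : {ω | s ≤ wDist c (bTuple u) (empFreq r ω)} =
      {ω | r * s ≤ weightedMismatches c u ω} := by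
    ext ω
    simp [← natCast_mul_wDist_empFreq hr, hr]
  rw [hevent]
  calc _ ≤ exp (-t * (r * s)) * mgf (weightedMismatches c u) (bernoulliSamples r p hple) t :=
        measure_ge_le_exp_mul_mgf _ ht .of_finite
    _ ≤ exp (-t * (r * s)) * exp (r * (wDist c (bTuple u) p / W * (exp (t * W) - 1))) := by
        gcongr
        exact mgf_weightedMismatches_le hp hc u hW hcW t
    _ = _ := by rw [← exp_add]; ring_nf

lemma measureReal_half_le_wDist_empFreq_le (hr : 0 < r) (hp : ∀ i, 0 ≤ p i) {c : Fin k → ℝ}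
    (hc : ∀ i, 0 ≤ c i) (u : Fin k → Bool) {W : ℝ} (hW : 0 < W) (hcW : ∀ i, c i ≤ W) {τ : ℝ}
    (hτ₀ : 0 < τ) (hτ₁ : τ ≤ 1) (hmean : 2 * wDist c (bTuple u) p ≤ τ * W) :
    (bernoulliSamples r p hple).real {ω | W / 2 ≤ wDist c (bTuple u) (empFreq r ω)} ≤
      exp (r / 2 * (1 - τ + log τ)) := by
  have hlog : log τ ≤ 0 := log_nonpos hτ₀.le hτ₁
  refine (measureReal_le_wDist_empFreq_le hr hp hc u hW hcW
    (div_nonneg (neg_nonneg.2 hlog) hW.le) (W / 2)).trans (exp_le_exp.2 ?_)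
  have htilt : exp (-log τ / W * W) = τ⁻¹ := by
    rw [div_mul_cancel₀ _ hW.ne', exp_neg, exp_log hτ₀]
  have hgap : 0 ≤ τ⁻¹ - 1 := sub_nonneg.2 (one_le_inv₀ hτ₀ |>.2 hτ₁)
  have hratio : wDist c (bTuple u) p / W ≤ τ / 2 := by
    rw [div_le_iff₀ hW]; linarith
  rw [htilt]
  calc (r : ℝ) * (wDist c (bTuple u) p / W * (τ⁻¹ - 1) - -log τ / W * (W / 2))
      ≤ r * (τ / 2 * (τ⁻¹ - 1) - -log τ / W * (W / 2)) := by gcongr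
    _ = r / 2 * (1 - τ + log τ) := by field_simp; ring

end Sampling

lemma one_sub_add_log_le_neg_sq {t : ℝ} (ht₀ : 0 < t) (ht₁ : t ≤ 1) :
    1 - t + log t ≤ -(1 - t) ^ 2 / 4 := by
  have hs₀ : 0 < √t := sqrt_pos.2 ht₀
  have hs₁ : √t ≤ 1 := sqrt_le_one.2 ht₁
  have hlog : log √t ≤ √t - 1 := log_le_sub_one_of_pos hs₀
  have hsq : √t ^ 2 = t := sq_sqrt ht₀.le
  have hlog_sqrt : log t = 2 * log √t := by rw [log_sqrt ht₀.le]; ring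
  nlinarith [mul_nonneg (mul_nonneg (sub_nonneg.2 hs₁) (sub_nonneg.2 hs₁))
    (mul_nonneg (sub_nonneg.2 hs₁) (by linarith : (0 : ℝ) ≤ 3 + √t))]

lemma two_le_log_inv {ε : ℝ} (hε : 0 < ε) (hε₁₀ : ε ≤ 1 / 10) : 2 ≤ log (1 / ε) := by
  rw [le_log_iff_exp_le (by positivity), le_div_iff₀ hε]
  have : exp 2 < 8 := by
    rw [show (2 : ℝ) = 1 + 1 by norm_num, exp_add]
    nlinarith [exp_one_lt_d9, exp_pos 1]
  nlinarith

lemma exp_half_mul_one_sub_add_log_le {ε : ℝ} (hε : 0 < ε) (hε₁₀ : ε ≤ 1 / 10) {k : ℕ}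
    (hk : 0 < k) {r : ℝ} (hr : 1000 * (k / ε ^ 2) * log (1 / ε) ≤ r) {τ : ℝ} (hτ₀ : 0 < τ)
    (hτ : τ ≤ 1 - ε / 5) :
    exp (r / 2 * (1 - τ + log τ)) ≤ τ / 2 * (ε / 2 ^ (k + 1)) := by
  set L := log (1 / ε)
  have hL : 2 ≤ L := two_le_log_inv hε hε₁₀
  have hk₁ : (1 : ℝ) ≤ k := by exact_mod_cast hk
  have hε₂ : ε ^ 2 ≤ 1 / 100 := by nlinarith
  have hrε : 1000 * k * L ≤ r * ε ^ 2 := by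
    have := mul_le_mul_of_nonneg_right hr (sq_nonneg ε)
    rwa [show 1000 * (k / ε ^ 2) * L * ε ^ 2 = 1000 * k * L by field_simp] at this
  have hr₂ : 2 ≤ r := by nlinarith
  have hgap : 1 - τ + log τ ≤ -(ε ^ 2 / 100) := by
    have := one_sub_add_log_le_neg_sq hτ₀ (by linarith)
    nlinarith
  have htarget : log (ε / 2 ^ (k + 2)) = -L - (k + 2) * log 2 := by
    rw [log_div hε.ne' (by positivity), log_pow, show log ε = -L by simp [L]]
    push_cast; ring
  have hkL : L + 8 * k ≤ 5 * k * L := by nlinarith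
  -- Split `r/2 = 1 + (r/2 - 1)`: one copy of `1 - τ + log τ ≤ 1 + log τ` yields the factor `τ`,
  -- the remaining copies, each `≤ -ε²/100`, yield `ε / 2^(k+2)`.
  have key : r / 2 * (1 - τ + log τ) ≤ log τ + log (ε / 2 ^ (k + 2)) := by
    rw [htarget]
    have h1 : (r / 2 - 1) * (1 - τ + log τ) ≤ (r / 2 - 1) * -(ε ^ 2 / 100) :=
      mul_le_mul_of_nonneg_left hgap (by linarith)
    nlinarith [log_two_lt_d9]
  calc exp (r / 2 * (1 - τ + log τ)) ≤ exp (log τ + log (ε / 2 ^ (k + 2))) := exp_le_exp.2 key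
    _ = τ / 2 * (ε / 2 ^ (k + 1)) := by
      rw [exp_add, exp_log hτ₀, exp_log (by positivity), pow_succ 2 (k + 1)]
      ring

lemma two_mul_lt_of_gap {ε a b m : ℝ} (hε : 0 < ε) (hε₁ : ε ≤ 1) (hm : 0 ≤ m) (hma : m ≤ a)
    (hgap : (1 + ε / 2) * a < b) : 2 * m < (1 - ε / 5) * (b - a + 2 * m) := by
  have h₁ : (1 - ε / 5) * (ε / 2 * a) < (1 - ε / 5) * (b - a) := by gcongr <;> linarith
  have h₂ : 2 * ε / 5 * m ≤ (1 - ε / 5) * (ε / 2 * a) := by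
    nlinarith [mul_nonneg (mul_nonneg hε.le (hm.trans hma)) (sub_nonneg.2 hε₁),
      mul_nonneg hε.le (sub_nonneg.2 hma)]
  linarith

lemma div_sub_add_two_mul_le_div {a b m : ℝ} (hm : 0 ≤ m) (hma : m ≤ a) (hab : a < b) :
    m / (b - a + 2 * m) ≤ a / b := by
  rw [div_le_div_iff₀ (by linarith) (by linarith)]
  nlinarith [mul_nonneg (sub_nonneg.2 hma) (sub_nonneg.2 hab.le), mul_nonneg (hm.trans hma) hm]

lemma le_of_forall_mem_Ioc_le {f : ℝ → ℝ} {x a b : ℝ} (hf : ContinuousAt f a) (hab : a < b)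
    (h : ∀ τ ∈ Set.Ioc a b, x ≤ f τ) : x ≤ f a :=
  ge_of_tendsto (hf.tendsto.mono_left nhdsWithin_le_nhds) (eventually_of_mem (Ioc_mem_nhdsGT hab) h)

/-- Concentration claim of the Sampling Lemma: if `u` minimizes `d^w(·,p)` over `R` and
`v ∈ R` has `d^w(v,p) > (1+ε/2)·d^w(u,p)`, then
`Pr(d^w(v,Q) ≤ d^w(u,Q)) ≤ (d^w(u,p)/d^w(v,p))·ε/2^{k+1}` for suitable sample size. -/
theorem sampling_concentration_claim :
    ∃ c : ℝ, 0 < c ∧ ∀ (ε : ℝ), 0 < ε → ε ≤ 1 / 10 → ∀ (k r : ℕ), 0 < k → 0 < r →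
      c * ((k : ℝ) / ε ^ 2) * Real.log (1 / ε) ≤ (r : ℝ) →
      ∀ (p w : Fin k → ℝ), (∀ i, 0 ≤ p i ∧ p i ≤ 1) → (∀ i, 0 ≤ w i) →
      ∀ (hple : ∀ i, ENNReal.ofReal (p i) ≤ 1),
      ∀ (R : Finset (Fin k → Bool)) (u v : Fin k → Bool), u ∈ R → v ∈ R →
      (∀ x ∈ R, wDist w (bTuple u) p ≤ wDist w (bTuple x) p) →
      (1 + ε / 2) * wDist w (bTuple u) p < wDist w (bTuple v) p →
      (bernoulliSamples r p hple)
          {ω | wDist w (bTuple v) (empFreq r ω) ≤ wDist w (bTuple u) (empFreq r ω)} ≤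
        ENNReal.ofReal
          ((wDist w (bTuple u) p / wDist w (bTuple v) p) * (ε / 2 ^ (k + 1))) := by
  refine ⟨1000, by norm_num, ?_⟩
  intro ε hε hε₁₀ k r hk hr hrc p w hp hw hple _ u v _ _ _ hgap
  set c := disagreeWeight w u v
  set W := ∑ i, c i
  set m := wDist c (bTuple u) p
  set a := wDist w (bTuple u) p
  set b := wDist w (bTuple v) p
  have hc := disagreeWeight_nonneg hw u v
  have hm : 0 ≤ m := wDist_nonneg hc _ _
  have hma : m ≤ a := wDist_mono_weight (disagreeWeight_le hw u v) _ _
  have hab : a < b := by nlinarith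
  have hW_eq : W = b - a + 2 * m := by linarith [wDist_sub_wDist_eq w u v hp]
  have hW : 0 < W := by linarith
  have hτ : 2 * m / W < 1 - ε / 5 := by
    rw [div_lt_iff₀ hW, hW_eq]
    exact two_mul_lt_of_gap hε (by linarith) hm hma hgap
  have hbound : ∀ τ ∈ Set.Ioc (2 * m / W) (1 - ε / 5),
      (bernoulliSamples r p hple).real
          {ω | wDist w (bTuple v) (empFreq r ω) ≤ wDist w (bTuple u) (empFreq r ω)} ≤
        τ / 2 * (ε / 2 ^ (k + 1)) := fun τ ⟨hτ₀, hτ₁⟩ => by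
    have hτ_pos : 0 < τ := lt_of_le_of_lt (by positivity) hτ₀
    refine (measureReal_mono (setOf_wDist_le_wDist_empFreq_subset w u v r)).trans <|
      (measureReal_half_le_wDist_empFreq_le hr (fun i => (hp i).1) hc u hW
        (fun i => single_le_sum (fun j _ => hc j) (mem_univ i)) hτ_pos (by linarith)
        ((div_lt_iff₀ hW).1 hτ₀).le).trans ?_
    exact exp_half_mul_one_sub_add_log_le hε hε₁₀ hk hrc hτ_pos hτ₁
  -- `2m/W` may be `0`, where `log` degenerates, hence the limit `τ ↓ 2m/W`.
  rw [← ofReal_measureReal]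
  refine ENNReal.ofReal_le_ofReal ((le_of_forall_mem_Ioc_le (by fun_prop) hτ hbound).trans ?_)
  calc 2 * m / W / 2 * (ε / 2 ^ (k + 1)) = m / W * (ε / 2 ^ (k + 1)) := by ring
    _ ≤ a / b * (ε / 2 ^ (k + 1)) := by
      rw [hW_eq]
      gcongr ?_ * _
      exact div_sub_add_two_mul_le_div hm hma hab
end
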